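/- Let g : (0,T) → ℝ be nonnegative and measurable with ∫ₛᵗ g(τ) dτ ≤ M/s for all 0 < s ≤ t < T. Then for every α > 0 and t ∈ (0,T), ∫₀ᵗ τ^{α+1} g(τ) dτ ≤ (α+1)·M·t^α/α. -/

import Mathlib

/-!
Write `τ ^ (α + 1) = ∫₀^τ (α + 1) s ^ α ds` and exchange the order of integration (Tonelli, in
`ℝ≥0∞`): the weighted integral becomes `∫₀ᵗ (α + 1) s ^ α (∫ₛᵗ g) ds`, and the hypothesis
`∫ₛᵗ g ≤ M / s` bounds it by `(α + 1) M ∫₀ᵗ s ^ (α - 1) ds = (α + 1) M t ^ α / α`.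
-/

open MeasureTheory Set
open scoped ENNReal

theorem lintegral_Ioc_lintegral_Ioo_mul_eq {μ ν : Measure ℝ} [SFinite μ] [SFinite ν]
    {k g : ℝ → ℝ≥0∞} (hk : Measurable k) (hg : Measurable g) (a t : ℝ) :
    ∫⁻ τ in Ioc a t, (∫⁻ s in Ioo a τ, k s ∂μ) * g τ ∂ν
      = ∫⁻ s in Ioo a t, k s * ∫⁻ τ in Ioc s t, g τ ∂ν ∂μ := by
  set H : ℝ → ℝ → ℝ≥0∞ := fun τ s => (Iio τ).indicator (fun s => k s * g τ) s
  have hH : Measurable (Function.uncurry H) :=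
    Measurable.ite (measurableSet_lt measurable_snd measurable_fst) (by fun_prop) measurable_const
  have h_inner_s : ∀ τ ∈ Ioc a t, (∫⁻ s in Ioo a τ, k s ∂μ) * g τ = ∫⁻ s in Ioo a t, H τ s ∂μ := by
    intro τ hτ
    rw [← lintegral_mul_const _ hk, lintegral_indicator measurableSet_Iio,
      Measure.restrict_restrict measurableSet_Iio, Iio_inter_Ioo, min_eq_left hτ.2]
  have h_inner_τ : ∀ s ∈ Ioo a t, k s * ∫⁻ τ in Ioc s t, g τ ∂ν = ∫⁻ τ in Ioc a t, H τ s ∂ν := by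
    intro s hs
    have hH_s : ∀ τ, H τ s = (Ioi s).indicator (fun τ => k s * g τ) τ := fun τ => by
      simp only [H, indicator_apply, mem_Iio, mem_Ioi]
    simp_rw [hH_s]
    rw [← lintegral_const_mul _ hg, lintegral_indicator measurableSet_Ioi,
      Measure.restrict_restrict measurableSet_Ioi, inter_comm, Ioc_inter_Ioi, max_eq_right hs.1.le]
  calc ∫⁻ τ in Ioc a t, (∫⁻ s in Ioo a τ, k s ∂μ) * g τ ∂ν
      = ∫⁻ τ in Ioc a t, ∫⁻ s in Ioo a t, H τ s ∂μ ∂ν :=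
        setLIntegral_congr_fun measurableSet_Ioc h_inner_s
    _ = ∫⁻ s in Ioo a t, ∫⁻ τ in Ioc a t, H τ s ∂ν ∂μ :=
        lintegral_lintegral_swap hH.aemeasurable
    _ = ∫⁻ s in Ioo a t, k s * ∫⁻ τ in Ioc s t, g τ ∂ν ∂μ :=
        (setLIntegral_congr_fun measurableSet_Ioo h_inner_τ).symm

theorem lintegral_Ioo_ofReal_mul_rpow {β c τ : ℝ} (hβ : -1 < β) (hc : 0 ≤ c) (hτ : 0 ≤ τ) :
    ∫⁻ s in Ioo 0 τ, ENNReal.ofReal (c * s ^ β) = ENNReal.ofReal (c * (τ ^ (β + 1) / (β + 1))) := by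
  have h_int : IntegrableOn (fun s : ℝ => c * s ^ β) (Ioc 0 τ) := by
    rw [← intervalIntegrable_iff_integrableOn_Ioc_of_le hτ]
    exact (intervalIntegral.intervalIntegrable_rpow' hβ).const_mul c
  have h_nonneg : 0 ≤ᵐ[volume.restrict (Ioc 0 τ)] fun s : ℝ => c * s ^ β := by
    filter_upwards [ae_restrict_mem measurableSet_Ioc] with s hs
    exact mul_nonneg hc (Real.rpow_nonneg hs.1.le β)
  rw [restrict_Ioo_eq_restrict_Ioc, ← ofReal_integral_eq_lintegral_ofReal h_int h_nonneg,
    ← intervalIntegral.integral_of_le hτ, intervalIntegral.integral_const_mul,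
    integral_rpow (Or.inl hβ), Real.zero_rpow (by linarith), sub_zero]

theorem integrableOn_Ioc_of_integrableOn_rpow_mul {μ : Measure ℝ} {g : ℝ → ℝ} {β s t : ℝ}
    (hβ : 0 ≤ β) (hs : 0 < s)
    (h : IntegrableOn (fun τ => τ ^ β * g τ) (Ioc s t) μ) : IntegrableOn g (Ioc s t) μ := by
  have h_bound : ∀ᵐ τ ∂μ.restrict (Ioc s t), ‖τ ^ (-β)‖ ≤ s ^ (-β) := by
    filter_upwards [ae_restrict_mem measurableSet_Ioc] with τ hτ
    rw [Real.norm_of_nonneg (Real.rpow_nonneg (hs.trans hτ.1).le _)]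
    exact Real.rpow_le_rpow_of_nonpos hs hτ.1.le (neg_nonpos.mpr hβ)
  refine IntegrableOn.congr_fun (h.bdd_mul (by fun_prop) h_bound) (fun τ hτ => ?_) measurableSet_Ioc
  have hτ0 : 0 < τ := hs.trans hτ.1
  rw [Real.rpow_neg hτ0.le, inv_mul_cancel_left₀ (Real.rpow_pos_of_pos hτ0 β).ne']

theorem lintegral_Ioc_ofReal_rpow_mul_le {G : ℝ → ℝ≥0∞} (hG : Measurable G) {α M t : ℝ}
    (hα : 0 < α) (hM : 0 ≤ M) (ht : 0 ≤ t)
    (h_tail : ∀ s ∈ Ioo 0 t, ∫⁻ τ in Ioc s t, G τ ≤ ENNReal.ofReal (M / s)) :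
    ∫⁻ τ in Ioc 0 t, ENNReal.ofReal (τ ^ (α + 1)) * G τ
      ≤ ENNReal.ofReal ((α + 1) * M * t ^ α / α) := by
  have hα1 : 0 < α + 1 := by linarith
  have h_weight : ∀ τ ∈ Ioc 0 t, ENNReal.ofReal (τ ^ (α + 1)) * G τ
      = (∫⁻ s in Ioo 0 τ, ENNReal.ofReal ((α + 1) * s ^ α)) * G τ := by
    intro τ hτ
    rw [lintegral_Ioo_ofReal_mul_rpow (by linarith) hα1.le hτ.1.le, mul_div_cancel₀ _ hα1.ne']
  have h_kernel : ∀ s ∈ Ioo 0 t, ENNReal.ofReal ((α + 1) * s ^ α) * ENNReal.ofReal (M / s)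
      = ENNReal.ofReal ((α + 1) * M * s ^ (α - 1)) := by
    intro s hs
    have := Real.rpow_nonneg hs.1.le α
    rw [← ENNReal.ofReal_mul (by positivity), Real.rpow_sub_one hs.1.ne']
    congr 1
    field_simp
  calc ∫⁻ τ in Ioc 0 t, ENNReal.ofReal (τ ^ (α + 1)) * G τ
      = ∫⁻ s in Ioo 0 t, ENNReal.ofReal ((α + 1) * s ^ α) * ∫⁻ τ in Ioc s t, G τ := by
        rw [setLIntegral_congr_fun measurableSet_Ioc h_weight]
        exact lintegral_Ioc_lintegral_Ioo_mul_eq (by fun_prop) hG 0 t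
    _ ≤ ∫⁻ s in Ioo 0 t, ENNReal.ofReal ((α + 1) * M * s ^ (α - 1)) := by
        rw [← setLIntegral_congr_fun measurableSet_Ioo h_kernel]
        exact setLIntegral_mono' measurableSet_Ioo fun s hs => by gcongr; exact h_tail s hs
    _ = ENNReal.ofReal ((α + 1) * M * t ^ α / α) := by
        rw [lintegral_Ioo_ofReal_mul_rpow (by linarith) (by positivity) ht, sub_add_cancel,
          mul_div_assoc]

/-- Weighted-in-time regularity estimate: if `g ≥ 0` is measurable on `(0,T)` with
`∫ₛᵗ g ≤ M/s` for all `0 < s ≤ t < T`, then for every `α > 0` and `t ∈ (0,T)`,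
`∫₀ᵗ τ^(α+1) g(τ) dτ ≤ (α+1)·M·t^α/α`. -/
theorem weighted_time_integral_bound
    (T M : ℝ) (hM : 0 < M)
    (g : ℝ → ℝ) (hg0 : ∀ s, 0 ≤ g s) (hgmeas : Measurable g)
    (hbound : ∀ s t : ℝ, 0 < s → s ≤ t → t < T → ∫ τ in s..t, g τ ≤ M / s) :
    ∀ α : ℝ, 0 < α → ∀ t ∈ Set.Ioo (0:ℝ) T,
      ∫ τ in (0:ℝ)..t, τ ^ (α + 1) * g τ ≤ (α + 1) * M * t ^ α / α := by
  intro α hα t ⟨ht0, htT⟩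
  rw [intervalIntegral.integral_of_le ht0.le]
  -- A non-integrable integrand has Bochner integral `0`. An integrable one makes `g` integrable on
  -- each `(s, t]`, `s > 0`, and only then does `hbound` speak about the true integral of `g`.
  by_cases h_int : IntegrableOn (fun τ => τ ^ (α + 1) * g τ) (Ioc 0 t)
  swap
  · rw [integral_undef h_int]
    positivity
  have h_tail : ∀ s ∈ Ioo 0 t, ∫⁻ τ in Ioc s t, ENNReal.ofReal (g τ) ≤ ENNReal.ofReal (M / s) := by
    intro s ⟨hs0, hst⟩
    have hg_int : IntegrableOn g (Ioc s t) :=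
      integrableOn_Ioc_of_integrableOn_rpow_mul (by linarith) hs0
        (h_int.mono_set (Ioc_subset_Ioc_left hs0.le))
    rw [← ofReal_integral_eq_lintegral_ofReal hg_int (.of_forall hg0),
      ← intervalIntegral.integral_of_le hst.le]
    exact ENNReal.ofReal_le_ofReal (hbound s t hs0 hst.le htT)
  have h_nonneg : 0 ≤ᵐ[volume.restrict (Ioc 0 t)] fun τ => τ ^ (α + 1) * g τ :=
    ae_restrict_of_forall_mem measurableSet_Ioc fun τ hτ =>
      mul_nonneg (Real.rpow_nonneg hτ.1.le _) (hg0 τ)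
  rw [← ENNReal.ofReal_le_ofReal_iff (by positivity),
    ofReal_integral_eq_lintegral_ofReal h_int h_nonneg]
  simp_rw [ENNReal.ofReal_mul' (hg0 _)]
  exact lintegral_Ioc_ofReal_rpow_mul_le hgmeas.ennreal_ofReal hα hM.le ht0.le h_tail
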